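/- arXiv:1805.01335 — 2 statements merged into one kernel-verified Lean document; each statement's English description precedes it below -/
import Mathlib

section
/- The function ξ₁(x,y) = 4 sin(2πy/√3) sin(π(x − y/√3)) sin(π(x + y/√3)) is strictly positive in the interior of the equilateral triangle with vertices (0,0), (1,0), (1/2, √3/2), and vanishes on its boundary. -/
open Real

/-- The first Dirichlet eigenfunction of the equilateral triangle, product form. -/
noncomputable def xi1 (p : ℝ × ℝ) : ℝ :=
  4 * Real.sin (2 * π * p.2 / Real.sqrt 3)
    * Real.sin (π * (p.1 - p.2 / Real.sqrt 3)) * Real.sin (π * (p.1 + p.2 / Real.sqrt 3))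

/-- `ξ₁` is strictly positive in the interior of the equilateral triangle with
vertices `(0,0)`, `(1,0)`, `(1/2, √3/2)`, and vanishes on its boundary. -/
theorem xi1_pos_interior_zero_boundary :
    (∀ x y : ℝ, 0 < y → y < Real.sqrt 3 * x → y < Real.sqrt 3 * (1 - x) →
      0 < xi1 (x, y)) ∧
    (∀ x y : ℝ, 0 ≤ y → y ≤ Real.sqrt 3 * x → y ≤ Real.sqrt 3 * (1 - x) →
      (y = 0 ∨ y = Real.sqrt 3 * x ∨ y = Real.sqrt 3 * (1 - x)) → xi1 (x, y) = 0) := by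
  have hs : (0:ℝ) < Real.sqrt 3 := by positivity
  have hpi := Real.pi_pos
  constructor
  · intro x y hy hxl hxr
    set u := y / Real.sqrt 3 with hu
    have hu0 : 0 < u := div_pos hy hs
    have hux : u < x := (div_lt_iff₀ hs).mpr (by linarith)
    have hux' : u < 1 - x := (div_lt_iff₀ hs).mpr (by linarith)
    have h1 : 0 < Real.sin (2 * π * y / Real.sqrt 3) := by
      have he : 2 * π * y / Real.sqrt 3 = 2 * π * u := by rw [hu]; ring
      rw [he]
      apply Real.sin_pos_of_pos_of_lt_pi
      · positivity
      · nlinarith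
    have h2 : 0 < Real.sin (π * (x - u)) := by
      apply Real.sin_pos_of_pos_of_lt_pi
      · nlinarith
      · nlinarith
    have h3 : 0 < Real.sin (π * (x + u)) := by
      apply Real.sin_pos_of_pos_of_lt_pi
      · nlinarith
      · nlinarith
    unfold xi1
    positivity
  · intro x y _ _ _ hcase
    have hs' : Real.sqrt 3 ≠ 0 := ne_of_gt hs
    rcases hcase with h | h | h
    · subst h
      simp [xi1]
    · have hyd : y / Real.sqrt 3 = x := by rw [h]; field_simp
      unfold xi1
      simp [hyd]
    · have hyd : y / Real.sqrt 3 = 1 - x := by rw [h]; field_simp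
      unfold xi1
      have : π * (x + y / Real.sqrt 3) = π := by rw [hyd]; ring
      simp [this]
end

section
/- Let R : ℝ → ℝ be a continuous 2π-periodic function defining a star-shaped domain Ω = {(r,θ) : 0 ≤ r < 1/R(θ)} (with R > 0). If Ω is convex, then for all φ and h, 2 sin²(h)(1 − cos h)[R(φ−h) + R(φ+h) − 2 cos(h) R(φ)] ≥ 0, and consequently R'' + R ≥ 0 in the sense of distributions. -/
open Real intervalIntegral
open Filter Topology MeasureTheory

/-- Second-order Taylor-type bound via two applications of the mean value inequality. -/
lemma symm_second_diff_bound (f : ℝ → ℝ) (hf : ContDiff ℝ (⊤ : ℕ∞) f) (x ε h : ℝ)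
    (hh : 0 < h) (hε : 0 ≤ ε)
    (hclose : ∀ s : ℝ, |s - x| ≤ h → |deriv (deriv f) s - deriv (deriv f) x| ≤ ε) :
    |f (x + h) + f (x - h) - 2 * f x - h ^ 2 * deriv (deriv f) x| ≤ 2 * ε * h ^ 2 := by
  have hfd : Differentiable ℝ f := hf.differentiable (by simp)
  have hf1 : ContDiff ℝ (((⊤ : ℕ∞)) : WithTop ℕ∞) (deriv f) := by
    have := ContDiff.iterate_deriv 1 (f := f) (hf.of_le (by simp))
    simpa using this
  have hf1d : Differentiable ℝ (deriv f) := hf1.differentiable (by simp)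
  set c₂ := deriv (deriv f) x with hc₂
  set g : ℝ → ℝ := fun t => f (x + t) - t * deriv f x - t ^ 2 / 2 * c₂ with hg
  set g1 : ℝ → ℝ := fun t => deriv f (x + t) - deriv f x - t * c₂ with hg1
  have hgd : ∀ t : ℝ, HasDerivAt g (g1 t) t := by
    intro t
    have h1 : HasDerivAt (fun t : ℝ => f (x + t)) (deriv f (x + t)) t := by
      have := HasDerivAt.comp t (hfd (x + t)).hasDerivAt ((hasDerivAt_id t).const_add x)
      exact this.congr_deriv (mul_one _)
    have h2 : HasDerivAt (fun t : ℝ => t * deriv f x) (deriv f x) t := by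
      simpa using (hasDerivAt_id t).mul_const (deriv f x)
    have h3 : HasDerivAt (fun t : ℝ => t ^ 2 / 2 * c₂) (t * c₂) t := by
      have := ((hasDerivAt_pow 2 t).div_const 2).mul_const c₂
      simpa using this.congr_deriv (by push_cast; ring)
    exact (h1.sub h2).sub h3
  have hg1d : ∀ t : ℝ, HasDerivAt g1 (deriv (deriv f) (x + t) - c₂) t := by
    intro t
    have h1 : HasDerivAt (fun t : ℝ => deriv f (x + t)) (deriv (deriv f) (x + t)) t := by
      have := HasDerivAt.comp t (hf1d (x + t)).hasDerivAt ((hasDerivAt_id t).const_add x)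
      exact this.congr_deriv (mul_one _)
    have h2a : HasDerivAt (fun t : ℝ => t * c₂) c₂ t := by
      simpa using (hasDerivAt_id t).mul_const c₂
    exact (h1.sub_const (deriv f x)).sub h2a
  -- bound |g1 t| ≤ ε * h on [-h, h]
  have hg1bound : ∀ t ∈ Set.Icc (-h) h, |g1 t| ≤ ε * h := by
    intro t ht
    have hcvx : Convex ℝ (Set.Icc (-h) h) := convex_Icc _ _
    have key := hcvx.norm_image_sub_le_of_norm_hasDerivWithin_le
      (f := g1) (f' := fun t => deriv (deriv f) (x + t) - c₂) (C := ε) (x := 0) (y := t)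
      (fun y hy => (hg1d y).hasDerivWithinAt)
      (fun y hy => by
        have : |y| ≤ h := abs_le.mpr ⟨hy.1, hy.2⟩
        simpa [Real.norm_eq_abs, add_sub_cancel_left] using
          hclose (x + y) (by simpa [add_sub_cancel_left] using this))
      (Set.mem_Icc.mpr ⟨by linarith, by linarith⟩) ht
    have hg10 : g1 0 = 0 := by simp [hg1]
    rw [hg10] at key
    have habs : |t| ≤ h := abs_le.mpr ⟨ht.1, ht.2⟩
    calc |g1 t| = ‖g1 t - 0‖ := by simp [Real.norm_eq_abs]
      _ ≤ ε * ‖t - 0‖ := key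
      _ ≤ ε * h := by
          rw [sub_zero, Real.norm_eq_abs]
          exact mul_le_mul_of_nonneg_left habs hε
  have hcvx : Convex ℝ (Set.Icc (-h) h) := convex_Icc _ _
  have keyg := fun (y : ℝ) (hy : y ∈ Set.Icc (-h) h) =>
    hcvx.norm_image_sub_le_of_norm_hasDerivWithin_le
    (f := g) (f' := g1) (C := ε * h) (x := 0) (y := y)
    (fun y hy => (hgd y).hasDerivWithinAt)
    (fun y hy => by simpa [Real.norm_eq_abs] using hg1bound y hy)
    (Set.mem_Icc.mpr ⟨by linarith, by linarith⟩) hy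
  have k1 := keyg h (Set.mem_Icc.mpr ⟨le_of_lt (by linarith : (-h) < h), le_refl h⟩)
  have k2 := keyg (-h) (Set.mem_Icc.mpr ⟨le_refl (-h), le_of_lt (by linarith : (-h) < h)⟩)
  have hg0 : g 0 = f x := by simp [hg]
  have e1 : g h - g 0 = f (x + h) - f x - h * deriv f x - h ^ 2 / 2 * c₂ := by
    simp [hg]; ring
  have e2 : g (-h) - g 0 = f (x - h) - f x + h * deriv f x - h ^ 2 / 2 * c₂ := by
    simp [hg]; ring_nf
  rw [Real.norm_eq_abs, Real.norm_eq_abs, e1] at k1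
  rw [Real.norm_eq_abs, Real.norm_eq_abs, e2] at k2
  have hb1 : |f (x + h) - f x - h * deriv f x - h ^ 2 / 2 * c₂| ≤ ε * h * h := by
    calc _ ≤ ε * h * |h - 0| := k1
      _ = ε * h * h := by rw [sub_zero, abs_of_pos hh]
  have hb2 : |f (x - h) - f x + h * deriv f x - h ^ 2 / 2 * c₂| ≤ ε * h * h := by
    calc _ ≤ ε * h * |(-h) - 0| := k2
      _ = ε * h * h := by rw [sub_zero, abs_neg, abs_of_pos hh]
  calc |f (x + h) + f (x - h) - 2 * f x - h ^ 2 * c₂|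
      = |(f (x + h) - f x - h * deriv f x - h ^ 2 / 2 * c₂)
        + (f (x - h) - f x + h * deriv f x - h ^ 2 / 2 * c₂)| := by ring_nf
    _ ≤ |f (x + h) - f x - h * deriv f x - h ^ 2 / 2 * c₂|
        + |f (x - h) - f x + h * deriv f x - h ^ 2 / 2 * c₂| := abs_add_le _ _
    _ ≤ ε * h * h + ε * h * h := add_le_add hb1 hb2
    _ = 2 * ε * h ^ 2 := by ring
open Real Filter Topology

lemma tendsto_cos_quot : Tendsto (fun h : ℝ => (2 - 2 * Real.cos h) / h ^ 2)
    (nhdsWithin 0 (Set.Ioi 0)) (nhds 1) := by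
  have hd : HasDerivAt Real.sin 1 0 := by simpa using Real.hasDerivAt_sin 0
  have hslope : Tendsto (fun t : ℝ => Real.sin t / t) (nhdsWithin 0 {(0:ℝ)}ᶜ) (nhds 1) := by
    have := hasDerivAt_iff_tendsto_slope.mp hd
    refine this.congr' ?_
    filter_upwards [self_mem_nhdsWithin] with t ht
    simp [slope_def_field, div_eq_inv_mul]
  have hmap : Tendsto (fun h : ℝ => h / 2) (nhdsWithin 0 (Set.Ioi 0)) (nhdsWithin 0 {(0:ℝ)}ᶜ) := by
    apply tendsto_nhdsWithin_of_tendsto_nhds_of_eventually_within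
    · have : Tendsto (fun h : ℝ => h / 2) (nhds 0) (nhds 0) := by
        simpa using (continuous_id.div_const 2).tendsto (0:ℝ)
      exact this.mono_left nhdsWithin_le_nhds
    · filter_upwards [self_mem_nhdsWithin] with h hh
      have : (0:ℝ) < h := hh
      simp only [Set.mem_compl_iff, Set.mem_singleton_iff]
      positivity
  have hcomp : Tendsto (fun h : ℝ => Real.sin (h / 2) / (h / 2))
      (nhdsWithin 0 (Set.Ioi 0)) (nhds 1) := hslope.comp hmap
  have hsq : Tendsto (fun h : ℝ => (Real.sin (h / 2) / (h / 2)) ^ 2)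
      (nhdsWithin 0 (Set.Ioi 0)) (nhds 1) := by
    have := hcomp.mul hcomp
    simpa [sq] using this
  refine hsq.congr' ?_
  filter_upwards [self_mem_nhdsWithin] with h hh
  have hh0 : (0:ℝ) < h := hh
  have hcos : Real.cos h = 1 - 2 * Real.sin (h / 2) ^ 2 := by
    have h1 := Real.cos_two_mul (h / 2)
    rw [show 2 * (h / 2) = h by ring] at h1
    have h2 := Real.sin_sq_add_cos_sq (h / 2)
    rw [h1]
    linear_combination 2 * h2
  rw [hcos]
  field_simp
  ring

lemma tendsto_symm_quot (f : ℝ → ℝ) (hf : ContDiff ℝ (⊤ : ℕ∞) f) (x : ℝ) :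
    Tendsto (fun h : ℝ => (f (x + h) + f (x - h) - 2 * f x) / h ^ 2)
      (nhdsWithin 0 (Set.Ioi 0)) (nhds (deriv (deriv f) x)) := by
  have hcont2 : Continuous (deriv (deriv f)) := by
    have h2 : ContDiff ℝ (((⊤ : ℕ∞)) : WithTop ℕ∞) (deriv^[2] f) :=
      ContDiff.iterate_deriv 2 (hf.of_le (by simp))
    have he : deriv^[2] f = deriv (deriv f) := by
      rw [Function.iterate_succ_apply', Function.iterate_one]
    rw [he] at h2
    exact h2.continuous
  rw [Metric.tendsto_nhdsWithin_nhds]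
  intro ε hε
  have hcx : ContinuousAt (deriv (deriv f)) x := hcont2.continuousAt
  rw [Metric.continuousAt_iff] at hcx
  obtain ⟨δ, hδ, hδ'⟩ := hcx (ε / 3) (by positivity)
  refine ⟨δ / 2, by positivity, ?_⟩
  intro h hh hdist
  have hh0 : (0:ℝ) < h := hh
  rw [Real.dist_eq, sub_zero, abs_of_pos hh0] at hdist
  have hclose : ∀ s : ℝ, |s - x| ≤ h → |deriv (deriv f) s - deriv (deriv f) x| ≤ ε / 3 := by
    intro s hs
    have : dist s x < δ := by
      rw [Real.dist_eq]
      calc |s - x| ≤ h := hs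
        _ < δ := by linarith
    exact le_of_lt (hδ' this)
  have key := symm_second_diff_bound f hf x (ε / 3) h hh0 (by positivity) hclose
  rw [Real.dist_eq]
  have hh2 : (0:ℝ) < h ^ 2 := by positivity
  have : (f (x + h) + f (x - h) - 2 * f x) / h ^ 2 - deriv (deriv f) x
      = (f (x + h) + f (x - h) - 2 * f x - h ^ 2 * deriv (deriv f) x) / h ^ 2 := by
    field_simp
  rw [this, abs_div, abs_of_pos hh2, div_lt_iff₀ hh2]
  calc |f (x + h) + f (x - h) - 2 * f x - h ^ 2 * deriv (deriv f) x|
      ≤ 2 * (ε / 3) * h ^ 2 := key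
    _ < ε * h ^ 2 := by nlinarith

lemma shift_integral (f g : ℝ → ℝ)
    (hfper : ∀ θ, f (θ + 2 * π) = f θ) (hgper : ∀ θ, g (θ + 2 * π) = g θ) (h : ℝ) :
    ∫ x in (0:ℝ)..(2 * π), f x * g (x + h)
      = ∫ x in (0:ℝ)..(2 * π), f (x - h) * g x := by
  have hW : Function.Periodic (fun y => f (y - h) * g y) (2 * π) := by
    intro y
    simp only
    rw [show y + 2 * π - h = (y - h) + 2 * π by ring, hfper, hgper]
  have e1 : ∫ x in (0:ℝ)..(2 * π), f x * g (x + h)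
      = ∫ x in (0:ℝ)..(2 * π), (fun y => f (y - h) * g y) (x + h) := by
    congr 1
    funext x
    simp [add_sub_cancel_right]
  rw [e1, intervalIntegral.integral_comp_add_right (fun y => f (y - h) * g y) h]
  have e2 : ∫ x in (0 + h)..(2 * π + h), (fun y => f (y - h) * g y) x
      = ∫ x in h..(h + 2 * π), (fun y => f (y - h) * g y) x := by
    rw [zero_add, add_comm h (2 * π)]
  rw [e2, hW.intervalIntegral_add_eq h 0, zero_add]

lemma part2main (R : ℝ → ℝ) (hcont : Continuous R) (hper : ∀ θ, R (θ + 2 * π) = R θ)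
    (hbr : ∀ x h : ℝ, 0 < h → h < π → 0 ≤ R (x - h) + R (x + h) - 2 * Real.cos h * R x)
    (χ : ℝ → ℝ) (hχ : ContDiff ℝ (⊤ : ℕ∞) χ) (hχper : ∀ x, χ (x + 2 * π) = χ x)
    (hχ0 : ∀ x, 0 ≤ χ x) :
    0 ≤ ∫ x in (0:ℝ)..(2 * π), R x * (deriv (deriv χ) x + χ x) := by
  have hχc : Continuous χ := hχ.continuous
  have hcont2 : Continuous (deriv (deriv χ)) := by
    have h2 : ContDiff ℝ (((⊤ : ℕ∞)) : WithTop ℕ∞) (deriv^[2] χ) :=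
      ContDiff.iterate_deriv 2 (hχ.of_le (by simp))
    have he : deriv^[2] χ = deriv (deriv χ) := by
      rw [Function.iterate_succ_apply', Function.iterate_one]
    rw [he] at h2
    exact h2.continuous
  set d2 : ℝ → ℝ := deriv (deriv χ) with hd2_def
  set K : Set ℝ := Set.Icc (-1 : ℝ) (2 * π + 1) with hK_def
  have hπ : (0:ℝ) < π := Real.pi_pos
  have h0K : (0:ℝ) ∈ K := Set.mem_Icc.mpr ⟨by norm_num, by linarith⟩
  obtain ⟨M₂, hM₂⟩ := isCompact_Icc.exists_bound_of_continuousOn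
    (s := K) hcont2.continuousOn
  obtain ⟨M₀, hM₀⟩ := isCompact_Icc.exists_bound_of_continuousOn
    (s := K) hχc.continuousOn
  obtain ⟨MR, hMR⟩ := isCompact_Icc.exists_bound_of_continuousOn
    (s := K) hcont.continuousOn
  have hM₂0 : 0 ≤ M₂ := le_trans (norm_nonneg _) (hM₂ 0 h0K)
  have hM₀0 : 0 ≤ M₀ := le_trans (norm_nonneg _) (hM₀ 0 h0K)
  have hMR0 : 0 ≤ MR := le_trans (norm_nonneg _) (hMR 0 h0K)
  set C : ℝ := MR * (5 * M₂ + M₀) with hC_def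
  set F : ℝ → ℝ → ℝ :=
    fun h x => R x * ((χ (x + h) + χ (x - h) - 2 * Real.cos h * χ x) / h ^ 2) with hF_def
  have hFc : ∀ h : ℝ, Continuous (F h) := by
    intro h
    exact hcont.mul ((((hχc.comp (continuous_id.add continuous_const)).add
      (hχc.comp (continuous_id.sub continuous_const))).sub
      (continuous_const.mul hχc)).div_const (h ^ 2))
  have hIoo1 : Set.Ioo (0:ℝ) 1 ∈ nhdsWithin (0:ℝ) (Set.Ioi 0) :=
    Ioo_mem_nhdsGT_of_mem (Set.mem_Ico.mpr ⟨le_refl 0, zero_lt_one⟩)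
  have hIooπ : Set.Ioo (0:ℝ) π ∈ nhdsWithin (0:ℝ) (Set.Ioi 0) :=
    Ioo_mem_nhdsGT_of_mem (Set.mem_Ico.mpr ⟨le_refl 0, hπ⟩)
  have h2π : (0:ℝ) ≤ 2 * π := by positivity
  -- dominated convergence
  have htend : Tendsto (fun h => ∫ x in (0:ℝ)..(2 * π), F h x)
      (nhdsWithin 0 (Set.Ioi 0)) (nhds (∫ x in (0:ℝ)..(2 * π), R x * (d2 x + χ x))) := by
    apply intervalIntegral.tendsto_integral_filter_of_dominated_convergence
      (bound := fun _ => C)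
    · exact Eventually.of_forall fun h => (hFc h).aestronglyMeasurable.restrict
    · filter_upwards [hIoo1] with h hh
      obtain ⟨hh0, hh1⟩ := hh
      apply ae_of_all
      intro x hx
      rw [Set.uIoc_of_le h2π] at hx
      obtain ⟨hx0, hx2⟩ := hx
      have hxK : ∀ s : ℝ, |s - x| ≤ h → s ∈ K := by
        intro s hs
        rw [abs_le] at hs
        exact Set.mem_Icc.mpr ⟨by linarith, by linarith⟩
      have hd2b : ∀ s : ℝ, |s - x| ≤ h → |d2 s - d2 x| ≤ 2 * M₂ := by
        intro s hs
        have h1 := hM₂ s (hxK s hs)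
        have h2 := hM₂ x (hxK x (by simp [abs_of_nonneg, le_of_lt hh0]))
        rw [Real.norm_eq_abs] at h1 h2
        calc |d2 s - d2 x| ≤ |d2 s| + |d2 x| := abs_sub _ _
          _ ≤ 2 * M₂ := by linarith
      have key := symm_second_diff_bound χ hχ x (2 * M₂) h hh0 (by linarith) hd2b
      have hnum1 : |χ (x + h) + χ (x - h) - 2 * χ x| ≤ 5 * M₂ * h ^ 2 := by
        have hd2x : |d2 x| ≤ M₂ := by
          have := hM₂ x (hxK x (by simp [abs_of_nonneg, le_of_lt hh0]))
          rwa [Real.norm_eq_abs] at this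
        have : |χ (x + h) + χ (x - h) - 2 * χ x|
            ≤ |χ (x + h) + χ (x - h) - 2 * χ x - h ^ 2 * d2 x| + |h ^ 2 * d2 x| := by
          have := abs_sub_abs_le_abs_sub (χ (x + h) + χ (x - h) - 2 * χ x) (h ^ 2 * d2 x)
          calc |χ (x + h) + χ (x - h) - 2 * χ x|
              = |(χ (x + h) + χ (x - h) - 2 * χ x - h ^ 2 * d2 x) + h ^ 2 * d2 x| := by
                ring_nf
            _ ≤ _ := abs_add_le _ _
        have habs2 : |h ^ 2 * d2 x| ≤ h ^ 2 * M₂ := by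
          rw [abs_mul, abs_of_nonneg (sq_nonneg h)]
          exact mul_le_mul_of_nonneg_left hd2x (sq_nonneg h)
        calc |χ (x + h) + χ (x - h) - 2 * χ x|
            ≤ |χ (x + h) + χ (x - h) - 2 * χ x - h ^ 2 * d2 x| + |h ^ 2 * d2 x| := this
          _ ≤ 2 * (2 * M₂) * h ^ 2 + h ^ 2 * M₂ := add_le_add key habs2
          _ = 5 * M₂ * h ^ 2 := by ring
      have hcosb : 2 - 2 * Real.cos h ≤ h ^ 2 := by
        have := Real.one_sub_sq_div_two_le_cos (x := h)
        linarith
      have hcos0 : 0 ≤ 2 - 2 * Real.cos h := by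
        have := Real.cos_le_one h; linarith
      have hnum : |χ (x + h) + χ (x - h) - 2 * Real.cos h * χ x| ≤ (5 * M₂ + M₀) * h ^ 2 := by
        have hsplit : χ (x + h) + χ (x - h) - 2 * Real.cos h * χ x
            = (χ (x + h) + χ (x - h) - 2 * χ x) + (2 - 2 * Real.cos h) * χ x := by ring
        have hχxb : |χ x| ≤ M₀ := by
          have := hM₀ x (hxK x (by simp [abs_of_nonneg, le_of_lt hh0]))
          rwa [Real.norm_eq_abs] at this
        have h2' : |(2 - 2 * Real.cos h) * χ x| ≤ h ^ 2 * M₀ := by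
          rw [abs_mul, abs_of_nonneg hcos0]
          exact mul_le_mul hcosb hχxb (abs_nonneg _) (sq_nonneg h)
        calc |χ (x + h) + χ (x - h) - 2 * Real.cos h * χ x|
            ≤ |χ (x + h) + χ (x - h) - 2 * χ x| + |(2 - 2 * Real.cos h) * χ x| := by
              rw [hsplit]; exact abs_add_le _ _
          _ ≤ 5 * M₂ * h ^ 2 + h ^ 2 * M₀ := add_le_add hnum1 h2'
          _ = (5 * M₂ + M₀) * h ^ 2 := by ring
      have hRxb : |R x| ≤ MR := by
        have := hMR x (hxK x (by simp [abs_of_nonneg, le_of_lt hh0]))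
        rwa [Real.norm_eq_abs] at this
      have hh2 : (0:ℝ) < h ^ 2 := by positivity
      rw [Real.norm_eq_abs, hF_def]
      simp only
      rw [abs_mul, abs_div, abs_of_pos hh2]
      have hq : |χ (x + h) + χ (x - h) - 2 * Real.cos h * χ x| / h ^ 2 ≤ 5 * M₂ + M₀ := by
        rw [div_le_iff₀ hh2]
        linarith [hnum]
      calc |R x| * (|χ (x + h) + χ (x - h) - 2 * Real.cos h * χ x| / h ^ 2)
          ≤ MR * (5 * M₂ + M₀) := mul_le_mul hRxb hq (by positivity) hMR0
        _ = C := by rw [hC_def]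
    · exact intervalIntegrable_const
    · apply ae_of_all
      intro x hx
      have h1 := tendsto_symm_quot χ hχ x
      have h2 := tendsto_cos_quot
      have h3 : Tendsto (fun h : ℝ => (χ (x + h) + χ (x - h) - 2 * χ x) / h ^ 2
          + ((2 - 2 * Real.cos h) / h ^ 2) * χ x)
          (nhdsWithin 0 (Set.Ioi 0)) (nhds (d2 x + 1 * χ x)) :=
        h1.add (h2.mul_const (χ x))
      have h4 := tendsto_const_nhds (x := R x) |>.mul h3
      rw [show R x * (d2 x + 1 * χ x) = R x * (d2 x + χ x) by ring] at h4
      refine h4.congr' ?_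
      filter_upwards [self_mem_nhdsWithin] with h hh
      have hh0 : (0:ℝ) < h := hh
      rw [hF_def]
      simp only
      rw [div_mul_eq_mul_div, ← add_div]
      congr 2
      ring
  -- eventual nonnegativity
  have hev : ∀ᶠ h in nhdsWithin (0:ℝ) (Set.Ioi 0),
      0 ≤ ∫ x in (0:ℝ)..(2 * π), F h x := by
    filter_upwards [hIooπ] with h hh
    obtain ⟨hh0, hhπ⟩ := hh
    have hint1 : IntervalIntegrable (fun x => R x * χ (x + h)) volume 0 (2 * π) :=
      (hcont.mul (hχc.comp (continuous_id.add continuous_const))).intervalIntegrable _ _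
    have hint2 : IntervalIntegrable (fun x => R x * χ (x - h)) volume 0 (2 * π) :=
      (hcont.mul (hχc.comp (continuous_id.sub continuous_const))).intervalIntegrable _ _
    have hint3 : IntervalIntegrable (fun x => R x * χ x) volume 0 (2 * π) :=
      (hcont.mul hχc).intervalIntegrable _ _
    have hint4 : IntervalIntegrable (fun x => R (x - h) * χ x) volume 0 (2 * π) :=
      ((hcont.comp (continuous_id.sub continuous_const)).mul hχc).intervalIntegrable _ _
    have hint5 : IntervalIntegrable (fun x => R (x + h) * χ x) volume 0 (2 * π) :=
      ((hcont.comp (continuous_id.add continuous_const)).mul hχc).intervalIntegrable _ _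
    have hE : ∫ x in (0:ℝ)..(2 * π), F h x
        = (∫ x in (0:ℝ)..(2 * π), (R (x - h) + R (x + h) - 2 * Real.cos h * R x) * χ x)
          / h ^ 2 := by
      rw [hF_def]
      simp only
      rw [show (fun x => R x * ((χ (x + h) + χ (x - h) - 2 * Real.cos h * χ x) / h ^ 2))
        = fun x => (R x * (χ (x + h) + χ (x - h) - 2 * Real.cos h * χ x)) / h ^ 2 by
          funext x; ring]
      rw [intervalIntegral.integral_div]
      congr 1
      have lhs_expand : ∫ x in (0:ℝ)..(2 * π), R x * (χ (x + h) + χ (x - h)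
          - 2 * Real.cos h * χ x)
          = (∫ x in (0:ℝ)..(2 * π), R x * χ (x + h))
            + (∫ x in (0:ℝ)..(2 * π), R x * χ (x - h))
            - 2 * Real.cos h * ∫ x in (0:ℝ)..(2 * π), R x * χ x := by
        rw [show (fun x => R x * (χ (x + h) + χ (x - h) - 2 * Real.cos h * χ x))
          = fun x => (R x * χ (x + h) + R x * χ (x - h))
            - (2 * Real.cos h) * (R x * χ x) by funext x; ring]
        rw [intervalIntegral.integral_sub (hint1.add hint2) (hint3.const_mul _),
          intervalIntegral.integral_add hint1 hint2,
          intervalIntegral.integral_const_mul]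
      have rhs_expand : ∫ x in (0:ℝ)..(2 * π),
          (R (x - h) + R (x + h) - 2 * Real.cos h * R x) * χ x
          = (∫ x in (0:ℝ)..(2 * π), R (x - h) * χ x)
            + (∫ x in (0:ℝ)..(2 * π), R (x + h) * χ x)
            - 2 * Real.cos h * ∫ x in (0:ℝ)..(2 * π), R x * χ x := by
        rw [show (fun x => (R (x - h) + R (x + h) - 2 * Real.cos h * R x) * χ x)
          = fun x => (R (x - h) * χ x + R (x + h) * χ x)
            - (2 * Real.cos h) * (R x * χ x) by funext x; ring]
        rw [intervalIntegral.integral_sub (hint4.add hint5) (hint3.const_mul _),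
          intervalIntegral.integral_add hint4 hint5,
          intervalIntegral.integral_const_mul]
      have sh1 : ∫ x in (0:ℝ)..(2 * π), R x * χ (x + h)
          = ∫ x in (0:ℝ)..(2 * π), R (x - h) * χ x :=
        shift_integral R χ hper hχper h
      have sh2 : ∫ x in (0:ℝ)..(2 * π), R x * χ (x - h)
          = ∫ x in (0:ℝ)..(2 * π), R (x + h) * χ x := by
        have := shift_integral R χ hper hχper (-h)
        simp only [sub_neg_eq_add] at this
        rw [← this]
        simp only [← sub_eq_add_neg]
      rw [lhs_expand, rhs_expand, sh1, sh2]
    rw [hE]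
    apply div_nonneg _ (sq_nonneg h)
    apply intervalIntegral.integral_nonneg h2π
    intro x _
    exact mul_nonneg (hbr x h hh0 hhπ) (hχ0 x)
  exact ge_of_tendsto htend hev

lemma keyIneq (R : ℝ → ℝ) (hper : ∀ θ, R (θ + 2 * π) = R θ)
    (hpos : ∀ θ, 0 < R θ)
    (hconv : Convex ℝ {p : ℝ × ℝ | ∃ r θ : ℝ, 0 ≤ r ∧ r * R θ < 1 ∧
      p = (r * Real.cos θ, r * Real.sin θ)})
    (φ h : ℝ) (hc : 0 < Real.cos h) :
    2 * Real.cos h * R φ ≤ R (φ - h) + R (φ + h) := by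
  set a := R (φ - h) with ha_def
  set b := R (φ + h) with hb_def
  set c := R φ with hc_def
  have ha : 0 < a := hpos _
  have hb : 0 < b := hpos _
  have hcc : 0 < c := hpos _
  have hab : 0 < a + b := by linarith
  set ρ : ℝ := 2 * Real.cos h / (a + b) with hρ_def
  have hρ : 0 < ρ := by positivity
  have main : ∀ ε : ℝ, 0 < ε → ε < 1 → ε * ρ * c < 1 := by
    intro ε hε0 hε1
    have hP1 : ((ε / a * Real.cos (φ - h), ε / a * Real.sin (φ - h)) : ℝ × ℝ) ∈
        {p : ℝ × ℝ | ∃ r θ : ℝ, 0 ≤ r ∧ r * R θ < 1 ∧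
          p = (r * Real.cos θ, r * Real.sin θ)} :=
      ⟨ε / a, φ - h, by positivity,
        by rw [← ha_def, div_mul_cancel₀ ε (ne_of_gt ha)]; exact hε1, rfl⟩
    have hP2 : ((ε / b * Real.cos (φ + h), ε / b * Real.sin (φ + h)) : ℝ × ℝ) ∈
        {p : ℝ × ℝ | ∃ r θ : ℝ, 0 ≤ r ∧ r * R θ < 1 ∧
          p = (r * Real.cos θ, r * Real.sin θ)} :=
      ⟨ε / b, φ + h, by positivity,
        by rw [← hb_def, div_mul_cancel₀ ε (ne_of_gt hb)]; exact hε1, rfl⟩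
    have ht0 : (0:ℝ) ≤ a / (a + b) := by positivity
    have ht1 : (0:ℝ) ≤ b / (a + b) := by positivity
    have htsum : a / (a + b) + b / (a + b) = 1 := by field_simp
    have hmem := hconv hP1 hP2 ht0 ht1 htsum
    have heqpt : (a / (a + b)) • ((ε / a * Real.cos (φ - h), ε / a * Real.sin (φ - h)) : ℝ × ℝ)
        + (b / (a + b)) • ((ε / b * Real.cos (φ + h), ε / b * Real.sin (φ + h)) : ℝ × ℝ)
        = ((ε * ρ) * Real.cos φ, (ε * ρ) * Real.sin φ) := by
      have e1 : Real.cos (φ - h) + Real.cos (φ + h) = 2 * Real.cos φ * Real.cos h := by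
        rw [Real.cos_sub, Real.cos_add]; ring
      have e2 : Real.sin (φ - h) + Real.sin (φ + h) = 2 * Real.sin φ * Real.cos h := by
        rw [Real.sin_sub, Real.sin_add]; ring
      have c1 : a / (a + b) * (ε / a) = ε / (a + b) := by
        field_simp
      have c2 : b / (a + b) * (ε / b) = ε / (a + b) := by
        field_simp
      simp only [Prod.smul_mk, smul_eq_mul, Prod.mk_add_mk, Prod.mk.injEq]
      rw [← mul_assoc, ← mul_assoc, ← mul_assoc, ← mul_assoc, c1, c2]
      constructor
      · rw [← mul_add, e1, hρ_def]; field_simp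
      · rw [← mul_add, e2, hρ_def]; field_simp
    rw [heqpt] at hmem
    obtain ⟨r, θ, hr0, hrR, hpt⟩ := hmem
    have hcx : r * Real.cos θ = ε * ρ * Real.cos φ := by
      have := congrArg Prod.fst hpt; simpa using this.symm
    have hsx : r * Real.sin θ = ε * ρ * Real.sin φ := by
      have := congrArg Prod.snd hpt; simpa using this.symm
    have hεnum : 0 < ε * ρ := by positivity
    have hr2 : r ^ 2 = (ε * ρ) ^ 2 := by
      have ht := Real.sin_sq_add_cos_sq θ
      have h2 := Real.sin_sq_add_cos_sq φ
      have e : r ^ 2 * (Real.sin θ ^ 2 + Real.cos θ ^ 2)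
          = (ε * ρ) ^ 2 * (Real.sin φ ^ 2 + Real.cos φ ^ 2) := by
        have q1 : (r * Real.cos θ) ^ 2 = (ε * ρ * Real.cos φ) ^ 2 := by rw [hcx]
        have q2 : (r * Real.sin θ) ^ 2 = (ε * ρ * Real.sin φ) ^ 2 := by rw [hsx]
        linear_combination q1 + q2
      rwa [ht, h2, mul_one, mul_one] at e
    have hr : r = ε * ρ := by
      have hfac : (r - ε * ρ) * (r + ε * ρ) = 0 := by linear_combination hr2
      have hsum : 0 < r + ε * ρ := by linarith
      have := (mul_eq_zero.mp hfac).resolve_right (ne_of_gt hsum)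
      linarith
    have hcθ : Real.cos θ = Real.cos φ := by
      have h' := hcx; rw [hr] at h'
      exact mul_left_cancel₀ (ne_of_gt hεnum) h'
    have hsθ : Real.sin θ = Real.sin φ := by
      have h' := hsx; rw [hr] at h'
      exact mul_left_cancel₀ (ne_of_gt hεnum) h'
    have hcos1 : Real.cos (θ - φ) = 1 := by
      rw [Real.cos_sub, hcθ, hsθ]
      linear_combination Real.sin_sq_add_cos_sq φ
    obtain ⟨n, hn⟩ := (Real.cos_eq_one_iff _).mp hcos1
    have hRθ : R θ = c := by
      have hθ : θ = φ + n * (2 * π) := by linarith [hn]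
      have hperiodic : Function.Periodic R (2 * π) := hper
      rw [hθ]
      exact (hperiodic.int_mul n) φ
    rw [hr, hRθ] at hrR
    exact hrR
  have hρc : ρ * c ≤ 1 := by
    by_contra hgt
    push_neg at hgt
    have hε := main (1 / (ρ * c)) (by positivity) ((div_lt_one (by positivity)).mpr hgt)
    have hone : 1 / (ρ * c) * ρ * c = 1 := by field_simp
    rw [hone] at hε
    exact lt_irrefl 1 hε
  rw [hρ_def, div_mul_eq_mul_div, div_le_one hab] at hρc
  linarith

/-- If the star-shaped domain `Ω = {(r,θ) : 0 ≤ r < 1/R(θ)}` defined by a positive,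
continuous, `2π`-periodic function `R` is convex, then for all `φ, h`,
`2 sin²(h)(1 − cos h)[R(φ−h) + R(φ+h) − 2 cos(h) R(φ)] ≥ 0`, and consequently
`R'' + R ≥ 0` in the sense of distributions. -/
theorem convex_polar_second_diff (R : ℝ → ℝ)
    (hcont : Continuous R) (hper : ∀ θ, R (θ + 2 * π) = R θ)
    (hpos : ∀ θ, 0 < R θ)
    (hconv : Convex ℝ {p : ℝ × ℝ | ∃ r θ : ℝ, 0 ≤ r ∧ r * R θ < 1 ∧
      p = (r * Real.cos θ, r * Real.sin θ)}) :
    (∀ φ h : ℝ,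
      0 ≤ 2 * Real.sin h ^ 2 * (1 - Real.cos h)
        * (R (φ - h) + R (φ + h) - 2 * Real.cos h * R φ)) ∧
    (∀ χ : ℝ → ℝ, ContDiff ℝ (⊤ : ℕ∞) χ → (∀ x, χ (x + 2 * π) = χ x) → (∀ x, 0 ≤ χ x) →
      0 ≤ ∫ x in (0 : ℝ)..(2 * π), R x * (deriv (deriv χ) x + χ x)) := by
  have part1 : ∀ φ h : ℝ,
      0 ≤ 2 * Real.sin h ^ 2 * (1 - Real.cos h)
        * (R (φ - h) + R (φ + h) - 2 * Real.cos h * R φ) := by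
    intro φ h
    have hfac : 0 ≤ 2 * Real.sin h ^ 2 * (1 - Real.cos h) := by
      have h1 := Real.cos_le_one h
      have h2 : (0:ℝ) ≤ Real.sin h ^ 2 := sq_nonneg _
      nlinarith
    have hbr : 0 ≤ R (φ - h) + R (φ + h) - 2 * Real.cos h * R φ := by
      rcases le_or_gt (Real.cos h) 0 with hc | hc
      · have h2 : 2 * Real.cos h * R φ ≤ 0 :=
          mul_nonpos_of_nonpos_of_nonneg (by linarith) (hpos φ).le
        have := hpos (φ - h)
        have := hpos (φ + h)
        linarith
      · have key := keyIneq R hper hpos hconv φ h hc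
        linarith
    exact mul_nonneg hfac hbr
  refine ⟨part1, ?_⟩
  intro χ hχ hχper hχ0
  apply part2main R hcont hper ?_ χ hχ hχper hχ0
  intro x h hh0 hhπ
  have hs : 0 < Real.sin h := Real.sin_pos_of_pos_of_lt_pi hh0 hhπ
  have hcos : Real.cos h < 1 := by
    have := Real.cos_lt_cos_of_nonneg_of_le_pi (le_refl 0) (le_of_lt hhπ) hh0
    rwa [Real.cos_zero] at this
  have hfac : 0 < 2 * Real.sin h ^ 2 * (1 - Real.cos h) :=
    mul_pos (mul_pos (by norm_num) (pow_pos hs 2)) (by linarith)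
  by_contra hneg
  push_neg at hneg
  have := mul_neg_of_pos_of_neg hfac hneg
  linarith [part1 x h]
end
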